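/- arXiv:1502.00877 — 6 statements merged into one kernel-verified Lean document; each statement's English description precedes it below -/
import Mathlib

section
/- There exist constants C > 0 and M > 0 such that for all α, δ > 0 with δ·α ≥ M, every k > 0 satisfying k·cosh(δk) = α·sinh(δk) obeys |k − α| ≤ C·α·e^{−δα} and consequently |k² − α²| ≤ C·α²·e^{−δα}; in other words, the unique negative eigenvalue E^D = −k² of the Robin–Dirichlet problem satisfies E^D = −α² + O(α²e^{−δα}) as δα → +∞. -/
/-- There are constants `C > 0`, `M > 0` such that for all `α, δ > 0` with `δα ≥ M`,
every `k > 0` solving `k·cosh(δk) = α·sinh(δk)` satisfies `|k − α| ≤ C·α·e^{−δα}` and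
`|k² − α²| ≤ C·α²·e^{−δα}`; i.e. `E^D = −k² = −α² + O(α²e^{−δα})` as `δα → ∞`. -/
theorem robin_dirichlet_eigenvalue_asymptotics :
    ∃ C > (0:ℝ), ∃ M > (0:ℝ), ∀ α δ : ℝ, 0 < α → 0 < δ → M ≤ δ * α →
      ∀ k : ℝ, 0 < k → k * Real.cosh (δ * k) = α * Real.sinh (δ * k) →
        |k - α| ≤ C * α * Real.exp (-(δ * α)) ∧
        |k ^ 2 - α ^ 2| ≤ C * α ^ 2 * Real.exp (-(δ * α)) := by
  refine ⟨4, by norm_num, 3, by norm_num, ?_⟩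
  intro α δ hα hδ hM k hk heq
  set t := δ * k with ht
  have htpos : 0 < t := mul_pos hδ hk
  have hEpos := Real.exp_pos t
  have hEpos' := Real.exp_pos (-t)
  have hEE : Real.exp t * Real.exp (-t) = 1 := by
    rw [← Real.exp_add]; simp
  have key : (α - k) * Real.exp t = (α + k) * Real.exp (-t) := by
    rw [Real.cosh_eq, Real.sinh_eq] at heq
    nlinarith [heq]
  have hkα : k < α := by nlinarith
  have key2 : (α - k) * Real.exp (2 * t) = α + k := by
    have : Real.exp (2 * t) = Real.exp t * Real.exp t := by
      rw [← Real.exp_add]; ring_nf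
    rw [this]
    calc (α - k) * (Real.exp t * Real.exp t)
        = ((α - k) * Real.exp t) * Real.exp t := by ring
      _ = ((α + k) * Real.exp (-t)) * Real.exp t := by rw [key]
      _ = (α + k) * (Real.exp t * Real.exp (-t)) := by ring
      _ = α + k := by rw [hEE]; ring
  have hhalf : α / 2 ≤ k := by
    by_contra h
    push_neg at h
    have hexp := Real.add_one_le_exp (2 * t)
    -- α + k = (α - k) exp(2t) ≥ (α - k)(1 + 2t), so 2k ≥ 2δk(α - k), so 1 ≥ δ(α - k)
    have h1 : (α - k) * (2 * t + 1) ≤ α + k := by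
      nlinarith [hexp, hkα]
    -- so k ≥ t (α - k) = δ k (α - k), hence 1 ≥ δ(α - k) ≥ δ α / 2 ≥ 3/2
    nlinarith [mul_pos hδ hk]
  have h2t : δ * α ≤ 2 * t := by
    have : δ * α ≤ δ * (2 * k) := by
      apply mul_le_mul_of_nonneg_left (by linarith) (le_of_lt hδ)
    linarith [this, ht ▸ (rfl : t = δ * k)]
  have hexple : Real.exp (-(2 * t)) ≤ Real.exp (-(δ * α)) :=
    Real.exp_le_exp.mpr (by linarith)
  have key3 : α - k = (α + k) * Real.exp (-(2 * t)) := by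
    have h2 : Real.exp (2 * t) * Real.exp (-(2 * t)) = 1 := by
      rw [← Real.exp_add]; simp
    calc α - k = (α - k) * (Real.exp (2 * t) * Real.exp (-(2 * t))) := by rw [h2]; ring
      _ = ((α - k) * Real.exp (2 * t)) * Real.exp (-(2 * t)) := by ring
      _ = (α + k) * Real.exp (-(2 * t)) := by rw [key2]
  have hbound : α - k ≤ 2 * α * Real.exp (-(δ * α)) := by
    calc α - k = (α + k) * Real.exp (-(2 * t)) := key3
      _ ≤ (2 * α) * Real.exp (-(2 * t)) := by
          apply mul_le_mul_of_nonneg_right (by linarith) (le_of_lt (Real.exp_pos _))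
      _ ≤ 2 * α * Real.exp (-(δ * α)) := by
          apply mul_le_mul_of_nonneg_left hexple (by linarith)
  have habs : |k - α| = α - k := by
    rw [abs_sub_comm]; exact abs_of_nonneg (by linarith)
  have hexpnn := (Real.exp_pos (-(δ * α))).le
  constructor
  · rw [habs]; nlinarith
  · have : |k ^ 2 - α ^ 2| = (α - k) * (α + k) := by
      rw [abs_sub_comm, abs_of_nonneg (by nlinarith)]; ring
    rw [this]
    calc (α - k) * (α + k) ≤ (2 * α * Real.exp (-(δ * α))) * (2 * α) := by
          apply mul_le_mul hbound (by linarith) (by linarith) (by positivity)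
      _ = 4 * α ^ 2 * Real.exp (-(δ * α)) := by ring
end

section
/- There exist constants C > 0 and M > 0 such that for all α, δ > 0 with δ·α ≥ M the following holds: if k > 0 satisfies k·cosh(δk) = α·sinh(δk) and ψ(t) = C₀·(e^{k(t−δ)} − e^{−k(t−δ)}) with C₀ > 0 chosen so that ∫₀^δ ψ(t)² dt = 1, then |ψ(0)² − 2α| ≤ C·α·e^{−δα}. -/
/-! With `x = δk`, `s = sinh x`, `c = cosh x`, the normalization gives `ψ(0)² = 2k s² / (sc - x)`
and the eigenvalue equation gives `α = kc / s`, so `ψ(0)² - 2α = 2k (xc - s) / (s (sc - x))`,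
which is `O(α x e^{-2x})`. Since `δα = x coth x ≤ x + 1`, this is `O(α e^{-δα})`. -/

namespace Real

theorem integral_sinh_sq (a b : ℝ) :
    ∫ x in a..b, sinh x ^ 2 = (sinh b * cosh b - b - (sinh a * cosh a - a)) / 2 := by
  have hderiv (x : ℝ) : HasDerivAt (fun x => (sinh x * cosh x - x) / 2) (sinh x ^ 2) x := by
    refine ((((hasDerivAt_sinh x).mul (hasDerivAt_cosh x)).sub (hasDerivAt_id x)).div_const
      2).congr_deriv ?_
    linear_combination cosh_sq x / 2
  rw [intervalIntegral.integral_eq_sub_of_hasDerivAt (fun x _ => hderiv x)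
    ((continuous_sinh.pow 2).intervalIntegrable a b)]
  ring

theorem integral_sinh_mul_sub_sq {k : ℝ} (hk : k ≠ 0) (δ : ℝ) :
    ∫ t in (0:ℝ)..δ, sinh (k * (t - δ)) ^ 2 = (sinh (δ * k) * cosh (δ * k) - δ * k) / (2 * k) := by
  simp_rw [mul_sub]
  rw [intervalIntegral.integral_comp_mul_sub (fun x => sinh x ^ 2) hk, integral_sinh_sq]
  simp only [mul_zero, zero_sub, sub_self, sinh_zero, cosh_neg, sinh_neg, smul_eq_mul]
  field_simp
  ring

theorem self_mul_cosh_le_add_one_mul_sinh {x : ℝ} (hx : 0 ≤ x) :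
    x * cosh x ≤ (x + 1) * sinh x := by
  have hexp : cosh x - sinh x ≤ 1 := by
    rw [cosh_sub_sinh, exp_le_one_iff]
    linarith
  nlinarith [self_le_sinh_iff.mpr hx]

theorem self_mul_exp_add_one_le_exp_two_mul (x : ℝ) : x * exp (x + 1) ≤ exp (2 * x) := by
  calc x * exp (x + 1) ≤ exp (x - 1) * exp (x + 1) := by
        gcongr
        linarith [add_one_le_exp (x - 1)]
    _ = exp (2 * x) := by rw [← exp_add]; ring_nf

theorem exp_two_mul_le_sixteen_mul_sinh_mul_cosh_sub {x : ℝ} (hx : 2 ≤ x) :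
    exp (2 * x) ≤ 16 * (sinh x * cosh x - x) := by
  have hsc : sinh x * cosh x = (exp (2 * x) - exp (-(2 * x))) / 4 := by
    have h := sinh_two_mul x
    rw [sinh_eq] at h
    linarith
  have hquad := quadratic_le_exp_of_nonneg (show 0 ≤ 2 * x by linarith)
  have hneg : exp (-(2 * x)) ≤ 1 := exp_le_one_iff.mpr (by linarith)
  rw [hsc]
  nlinarith

theorem abs_sq_sub_two_mul_le_of_robin {x k α C₀ : ℝ} (hx : 2 ≤ x) (hk : 0 < k)
    (heig : k * cosh x = α * sinh x) (hnorm : 2 * C₀ ^ 2 * (sinh x * cosh x - x) = k) :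
    |(2 * C₀ * sinh x) ^ 2 - 2 * α| ≤ 32 * α * exp (-(x + 1)) := by
  have hs : 0 < sinh x := sinh_pos_iff.mpr (by linarith)
  have hgap := exp_two_mul_le_sixteen_mul_sinh_mul_cosh_sub hx
  have hP : 0 < sinh x * cosh x - x := by linarith [exp_pos (2 * x)]
  have hsP : 0 < sinh x * (sinh x * cosh x - x) := mul_pos hs hP
  have hx_le : x ≤ 16 * exp (-(x + 1)) * (sinh x * cosh x - x) := by
    calc x = x * exp (x + 1) * exp (-(x + 1)) := by rw [mul_assoc, ← exp_add]; simp
      _ ≤ exp (2 * x) * exp (-(x + 1)) := by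
          gcongr; exact self_mul_exp_add_one_le_exp_two_mul x
      _ ≤ 16 * (sinh x * cosh x - x) * exp (-(x + 1)) := by gcongr
      _ = 16 * exp (-(x + 1)) * (sinh x * cosh x - x) := by ring
  have key : ((2 * C₀ * sinh x) ^ 2 - 2 * α) * (sinh x * (sinh x * cosh x - x)) =
      2 * k * (x * cosh x - sinh x) := by
    linear_combination 2 * sinh x ^ 3 * hnorm + 2 * (sinh x * cosh x - x) * heig
      - 2 * k * sinh x * cosh_sq x
  have hnum : 0 ≤ x * cosh x - sinh x := by nlinarith [sinh_lt_cosh x, cosh_pos x]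
  refine le_of_mul_le_mul_right ?_ hsP
  calc |(2 * C₀ * sinh x) ^ 2 - 2 * α| * (sinh x * (sinh x * cosh x - x))
      = 2 * k * (x * cosh x - sinh x) := by
        rw [← abs_of_pos hsP, ← abs_mul, key, abs_of_nonneg (by positivity)]
    _ ≤ 2 * k * cosh x * x := by nlinarith
    _ ≤ 2 * k * cosh x * (16 * exp (-(x + 1)) * (sinh x * cosh x - x)) := by
        gcongr
    _ = 32 * α * exp (-(x + 1)) * (sinh x * (sinh x * cosh x - x)) := by
        linear_combination 32 * exp (-(x + 1)) * (sinh x * cosh x - x) * heig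

end Real

/-- There are constants `C > 0`, `M > 0` such that for all `α, δ > 0` with `δα ≥ M`:
if `k > 0` solves `k·cosh(δk) = α·sinh(δk)` and `ψ(t) = C₀(e^{k(t−δ)} − e^{−k(t−δ)})`
with `C₀ > 0` normalizing `ψ` in `L²(0,δ)`, then `|ψ(0)² − 2α| ≤ C·α·e^{−δα}`. -/
theorem robin_dirichlet_eigenfunction_boundary_value :
    ∃ C > (0:ℝ), ∃ M > (0:ℝ), ∀ α δ : ℝ, 0 < α → 0 < δ → M ≤ δ * α →
      ∀ k C₀ : ℝ, 0 < k →
        k * Real.cosh (δ * k) = α * Real.sinh (δ * k) →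
        0 < C₀ →
        ∀ ψ : ℝ → ℝ,
          ψ = (fun t => C₀ * (Real.exp (k * (t - δ)) - Real.exp (-(k * (t - δ))))) →
          (∫ t in (0:ℝ)..δ, ψ t ^ 2) = 1 →
          |ψ 0 ^ 2 - 2 * α| ≤ C * α * Real.exp (-(δ * α)) := by
  open Real in
  refine ⟨32, by norm_num, 3, by norm_num, ?_⟩
  rintro α δ hα hδ hM k C₀ hk heig - ψ rfl hnorm
  have hψ (t : ℝ) : C₀ * (exp (k * (t - δ)) - exp (-(k * (t - δ)))) =
      2 * C₀ * sinh (k * (t - δ)) := by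
    rw [sinh_eq]; ring
  have hx : 0 ≤ δ * k := by positivity
  have hδα : δ * α ≤ δ * k + 1 := by
    have h := self_mul_cosh_le_add_one_mul_sinh hx
    have hs : 0 < sinh (δ * k) := sinh_pos_iff.mpr (by positivity)
    nlinarith
  have hC₀ : 2 * C₀ ^ 2 * (sinh (δ * k) * cosh (δ * k) - δ * k) = k := by
    simp only [hψ, mul_pow, intervalIntegral.integral_const_mul,
      integral_sinh_mul_sub_sq hk.ne'] at hnorm
    field_simp at hnorm
    linear_combination hnorm
  beta_reduce
  rw [hψ, zero_sub, mul_neg, sinh_neg, mul_neg, neg_sq, mul_comm k δ]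
  calc |(2 * C₀ * sinh (δ * k)) ^ 2 - 2 * α| ≤ 32 * α * exp (-(δ * k + 1)) :=
        abs_sq_sub_two_mul_le_of_robin (by linarith) hk heig hC₀
    _ ≤ 32 * α * exp (-(δ * α)) := by gcongr
end

section
/- For each fixed β ≥ 0 there exist constants C > 0, M > 0 and δ₀ > 0 such that for all α, δ > 0 with δ·α ≥ M and δ ≤ δ₀ there exists a unique k > 0 satisfying k·(k·sinh(δk) − β·cosh(δk)) = α·(k·cosh(δk) − β·sinh(δk)), and this k obeys |k − α| ≤ C·α·e^{−δα}; in particular the unique negative eigenvalue E^β = −k² of the problem satisfies E^β = −α² + O(α²e^{−δα}). -/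
section aux

variable (β α δ : ℝ)

/-- The transformed function: the eigenvalue equation is `robinG β α δ k = 0`. -/
noncomputable def robinG (k : ℝ) : ℝ :=
  (k - α) * (k - β) * Real.cosh (δ*k) - (k^2 + α*β) * Real.exp (-(δ*k))

lemma robinG_eq (k : ℝ) :
    robinG β α δ k
    = k * (k * Real.sinh (δ * k) - β * Real.cosh (δ * k)) -
          α * (k * Real.cosh (δ * k) - β * Real.sinh (δ * k)) := by
  unfold robinG; rw [← Real.cosh_sub_sinh]; ring

variable {β α δ : ℝ} (hβ : 0 ≤ β) (hα : 0 < α) (hδ : 0 < δ)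
  (hM : 4 ≤ δ * α) (hβα : 8 * (β + 1) ≤ α) (hδ' : 2 * δ * (β + 1) ≤ 1)

include hβ hα hδ hM hβα hδ'

/-- negativity on (0, α] -/
lemma robinG_neg {k : ℝ} (hk : 0 < k) (hkα : k ≤ α) : robinG β α δ k < 0 := by
  unfold robinG
  have hβ1' : (0:ℝ) < β + 1 := by linarith
  rcases le_or_gt k β with hkβ | hkβ
  · -- 0 < k ≤ β
    have hβpos : 0 < β := lt_of_lt_of_le hk hkβ
    have hδk0 : 0 < δ * k := mul_pos hδ hk
    have hkab : 0 < k^2 + α*β := by nlinarith [sq_nonneg k, mul_pos hα hβpos]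
    have hcosh_le : Real.cosh (δ*k) ≤ Real.exp (δ*k) := by
      rw [Real.cosh_eq]
      nlinarith [Real.exp_le_exp.2 (show -(δ*k) ≤ δ*k by linarith)]
    have t1 : 2*δ*(β+1)*(k^2+α*β) ≤ 1*(k^2+α*β) :=
      mul_le_mul_of_nonneg_right hδ' hkab.le
    have t2 : k^2 + α*β ≤ β*(α+β) := by nlinarith
    have key : 2*δ*(k^2+α*β) < α+β := by nlinarith [t1, t2, hβ1']
    have hprod : 0 < k * ((α+β) - 2*δ*(k^2+α*β)) := mul_pos hk (by linarith)
    have hpoly : (α-k) * (β-k) < (k^2 + α*β) * (1 - 2*(δ*k)) := by nlinarith [hprod]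
    have h2 : 1 - 2*(δ*k) ≤ Real.exp (-(2*(δ*k))) := by
      nlinarith [Real.add_one_le_exp (-(2*(δ*k)))]
    have h3 : (α-k) * (β-k) < (k^2 + α*β) * Real.exp (-(2*(δ*k))) :=
      lt_of_lt_of_le hpoly (mul_le_mul_of_nonneg_left h2 hkab.le)
    have h4 : ((α-k) * (β-k)) * Real.exp (δ*k) < ((k^2 + α*β) * Real.exp (-(2*(δ*k)))) * Real.exp (δ*k) :=
      mul_lt_mul_of_pos_right h3 (Real.exp_pos _)
    have h5 : ((k^2 + α*β) * Real.exp (-(2*(δ*k)))) * Real.exp (δ*k) = (k^2 + α*β) * Real.exp (-(δ*k)) := by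
      rw [mul_assoc, ← Real.exp_add, show -(2*(δ*k)) + δ*k = -(δ*k) by ring]
    have h6 : (k - α) * (k - β) * Real.cosh (δ*k) ≤ ((α-k) * (β-k)) * Real.exp (δ*k) := by
      have hnn : 0 ≤ (α-k) * (β-k) := mul_nonneg (by linarith) (by linarith)
      calc (k - α) * (k - β) * Real.cosh (δ*k) = ((α-k)*(β-k)) * Real.cosh (δ*k) := by ring
        _ ≤ ((α-k) * (β-k)) * Real.exp (δ*k) := mul_le_mul_of_nonneg_left hcosh_le hnn
    rw [h5] at h4
    linarith [h4, h6]
  · -- β < k ≤ α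
    have h1 : (k - α) * (k - β) * Real.cosh (δ*k) ≤ 0 :=
      mul_nonpos_of_nonpos_of_nonneg
        (mul_nonpos_of_nonpos_of_nonneg (by linarith) (by linarith)) (Real.cosh_pos _).le
    have hkab : 0 < k^2 + α*β := by nlinarith [sq_nonneg k, mul_nonneg hα.le hβ, pow_pos hk 2]
    have h2 : 0 < (k^2 + α*β) * Real.exp (-(δ*k)) := mul_pos hkab (Real.exp_pos _)
    linarith

/-- positivity on [2α, ∞) -/
lemma robinG_pos {k : ℝ} (hk : 2*α ≤ k) : 0 < robinG β α δ k := by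
  unfold robinG
  have hk0 : 0 < k := by linarith
  have hδk : 8 ≤ δ * k := by nlinarith
  have hcosh_ge : Real.exp (δ*k) / 2 ≤ Real.cosh (δ*k) := by
    rw [Real.cosh_eq]; nlinarith [Real.exp_pos (-(δ*k))]
  have hA : k^2/4 ≤ (k - α) * (k - β) := by nlinarith
  have hB : k^2 + α*β ≤ 2*k^2 := by nlinarith
  have hX : 9 ≤ Real.exp (δ*k) := by nlinarith [Real.add_one_le_exp (δ*k)]
  have hE : Real.exp (-(δ*k)) * Real.exp (δ*k) = 1 := by
    rw [← Real.exp_add]; simp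
  have hEpos := Real.exp_pos (-(δ*k))
  have hXpos := Real.exp_pos (δ*k)
  -- (k^2+αβ) e^{-δk} ≤ 2k² e^{-δk} < (k²/4)(e^{δk}/2) ≤ (k-α)(k-β) cosh
  have hEle : Real.exp (-(δ*k)) ≤ 1/9 := by nlinarith
  have key : 2*k^2 * Real.exp (-(δ*k)) < k^2/4 * (Real.exp (δ*k)/2) := by
    nlinarith [pow_pos hk0 2, hEle, hX]
  have h1 : (k^2 + α*β) * Real.exp (-(δ*k)) ≤ 2*k^2 * Real.exp (-(δ*k)) :=
    mul_le_mul_of_nonneg_right hB hEpos.le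
  have h2 : k^2/4 * (Real.exp (δ*k)/2) ≤ (k - α) * (k - β) * Real.cosh (δ*k) :=
    mul_le_mul hA hcosh_ge (by positivity) (by nlinarith)
  linarith

/-- strict monotonicity on [α, 2α] -/
lemma robinG_strictMono {k₁ k₂ : ℝ} (h1 : α ≤ k₁) (h12 : k₁ < k₂) (h2 : k₂ ≤ 2*α) :
    robinG β α δ k₁ < robinG β α δ k₂ := by
  unfold robinG
  have hβa : β ≤ α := by linarith
  -- A part
  have hk₁0 : 0 < k₁ := lt_of_lt_of_le hα h1
  have hk₂0 : 0 < k₂ := lt_trans hk₁0 h12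
  have hcosh : Real.cosh (δ*k₁) ≤ Real.cosh (δ*k₂) := by
    rw [Real.cosh_le_cosh, abs_of_nonneg (mul_pos hδ hk₁0).le,
      abs_of_nonneg (mul_pos hδ hk₂0).le]
    exact mul_le_mul_of_nonneg_left h12.le hδ.le
  have hA : (k₁ - α) * (k₁ - β) * Real.cosh (δ*k₁) < (k₂ - α) * (k₂ - β) * Real.cosh (δ*k₂) := by
    have hfac : (k₁ - α) * (k₁ - β) < (k₂ - α) * (k₂ - β) := by nlinarith
    calc (k₁ - α) * (k₁ - β) * Real.cosh (δ*k₁)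
        < (k₂ - α) * (k₂ - β) * Real.cosh (δ*k₁) :=
          mul_lt_mul_of_pos_right hfac (Real.cosh_pos _)
      _ ≤ (k₂ - α) * (k₂ - β) * Real.cosh (δ*k₂) :=
          mul_le_mul_of_nonneg_left hcosh (by nlinarith)
  -- B part : (k₂²+αβ) e^{-δk₂} ≤ (k₁²+αβ) e^{-δk₁}
  have hBpoly : k₂^2 + α*β ≤ (k₁^2 + α*β) * (1 + δ*(k₂ - k₁)) := by
    have hδk1 : 4*α ≤ δ * k₁^2 := by nlinarith
    nlinarith [mul_pos hδ (show (0:ℝ) < k₂ - k₁ by linarith), mul_nonneg hα.le hβ]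
  have hexp : (1 + δ*(k₂ - k₁)) * Real.exp (-(δ*k₂)) ≤ Real.exp (-(δ*k₁)) := by
    have e1 : 1 + δ*(k₂ - k₁) ≤ Real.exp (δ*(k₂ - k₁)) := by
      nlinarith [Real.add_one_le_exp (δ*(k₂ - k₁))]
    have e2 : Real.exp (δ*(k₂ - k₁)) * Real.exp (-(δ*k₂)) = Real.exp (-(δ*k₁)) := by
      rw [← Real.exp_add, show δ*(k₂ - k₁) + -(δ*k₂) = -(δ*k₁) by ring]
    nlinarith [Real.exp_pos (-(δ*k₂))]
  have hB : (k₂^2 + α*β) * Real.exp (-(δ*k₂)) ≤ (k₁^2 + α*β) * Real.exp (-(δ*k₁)) := by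
    calc (k₂^2 + α*β) * Real.exp (-(δ*k₂))
        ≤ ((k₁^2 + α*β) * (1 + δ*(k₂ - k₁))) * Real.exp (-(δ*k₂)) :=
          mul_le_mul_of_nonneg_right hBpoly (Real.exp_pos _).le
      _ = (k₁^2 + α*β) * ((1 + δ*(k₂ - k₁)) * Real.exp (-(δ*k₂))) := by ring
      _ ≤ (k₁^2 + α*β) * Real.exp (-(δ*k₁)) :=
          mul_le_mul_of_nonneg_left hexp (by nlinarith [sq_nonneg k₁, mul_nonneg hα.le hβ])
  linarith

/-- any positive root lies in (α, 2α) -/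
lemma robinG_root_loc {k : ℝ} (hk : 0 < k) (hroot : robinG β α δ k = 0) :
    α < k ∧ k < 2*α := by
  constructor
  · by_contra h
    exact absurd hroot (ne_of_lt (robinG_neg hβ hα hδ hM hβα hδ' hk (not_lt.1 h)))
  · by_contra h
    exact absurd hroot (ne_of_gt (robinG_pos hβ hα hδ hM hβα hδ' (not_lt.1 h)))

/-- error bound for roots -/
lemma robinG_root_bound {k : ℝ} (h1 : α < k) (h2 : k < 2*α) (hroot : robinG β α δ k = 0) :
    k - α ≤ 20 * α * Real.exp (-(δ*α)) := by
  have heq : (k - α) * (k - β) * Real.cosh (δ*k) = (k^2 + α*β) * Real.exp (-(δ*k)) := by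
    have := hroot; unfold robinG at this; linarith
  have hβa : β ≤ α/2 := by linarith
  have hcosh_ge : Real.exp (δ*k) / 2 ≤ Real.cosh (δ*k) := by
    rw [Real.cosh_eq]; nlinarith [Real.exp_pos (-(δ*k))]
  have e1 : (k - α) * (α/2) * (Real.exp (δ*k)/2) ≤ (k - α) * (k - β) * Real.cosh (δ*k) := by
    have hka : 0 ≤ k - α := by linarith
    have : (k - α) * (α/2) ≤ (k - α) * (k - β) :=
      mul_le_mul_of_nonneg_left (by linarith) hka
    calc (k - α) * (α/2) * (Real.exp (δ*k)/2)
        ≤ (k - α) * (k - β) * (Real.exp (δ*k)/2) :=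
          mul_le_mul_of_nonneg_right this (by positivity)
      _ ≤ (k - α) * (k - β) * Real.cosh (δ*k) :=
          mul_le_mul_of_nonneg_left hcosh_ge (by nlinarith)
  have e2 : (k^2 + α*β) * Real.exp (-(δ*k)) ≤ 5*α^2 * Real.exp (-(δ*k)) :=
    mul_le_mul_of_nonneg_right (by nlinarith) (Real.exp_pos _).le
  have e3 : (k - α) * (α/2) * (Real.exp (δ*k)/2) ≤ 5*α^2 * Real.exp (-(δ*k)) := by
    linarith
  have hX1 : (1:ℝ) ≤ Real.exp (δ*k) := Real.one_le_exp (mul_nonneg hδ.le (by linarith))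
  have e4 : (k - α) * (α/4) ≤ (k - α) * (α/2) * (Real.exp (δ*k)/2) := by
    nlinarith [mul_nonneg (show (0:ℝ) ≤ k - α by linarith) hα.le]
  have e5 : Real.exp (-(δ*k)) ≤ Real.exp (-(δ*α)) :=
    Real.exp_le_exp.2 (by nlinarith)
  have e6 : (k - α) * (α/4) ≤ 5*α^2 * Real.exp (-(δ*α)) := by
    nlinarith [Real.exp_pos (-(δ*k))]
  nlinarith [Real.exp_pos (-(δ*α))]

end aux

/-- For each fixed `β ≥ 0` there are `C > 0`, `M > 0`, `δ₀ > 0` such that for all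
`α, δ > 0` with `δα ≥ M` and `δ ≤ δ₀`, there is a unique `k > 0` solving
`k(k·sinh(δk) − β·cosh(δk)) = α(k·cosh(δk) − β·sinh(δk))`, and it satisfies
`|k − α| ≤ C·α·e^{−δα}`; in particular `E^β = −k² = −α² + O(α²e^{−δα})`. -/
theorem robin_robin_eigenvalue_asymptotics (β : ℝ) (hβ : 0 ≤ β) :
    ∃ C > (0:ℝ), ∃ M > (0:ℝ), ∃ δ₀ > (0:ℝ), ∀ α δ : ℝ, 0 < α → 0 < δ →
      M ≤ δ * α → δ ≤ δ₀ →
      (∃! k : ℝ, 0 < k ∧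
        k * (k * Real.sinh (δ * k) - β * Real.cosh (δ * k)) =
          α * (k * Real.cosh (δ * k) - β * Real.sinh (δ * k))) ∧
      (∀ k : ℝ, 0 < k →
        k * (k * Real.sinh (δ * k) - β * Real.cosh (δ * k)) =
          α * (k * Real.cosh (δ * k) - β * Real.sinh (δ * k)) →
        |k - α| ≤ C * α * Real.exp (-(δ * α)) ∧
        |(-(k ^ 2)) - (-(α ^ 2))| ≤ C * α ^ 2 * Real.exp (-(δ * α))) := by
  refine ⟨60, by norm_num, 4, by norm_num, 1/(2*(β+1)), by positivity, ?_⟩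
  intro α δ hα hδ hM hδ0
  have hβ1 : (0:ℝ) < β + 1 := by linarith
  have hδ'2 : 2 * δ * (β + 1) ≤ 1 := by
    have h2 : (0:ℝ) < 2*(β+1) := by linarith
    have := mul_le_mul_of_nonneg_right hδ0 h2.le
    rw [one_div, inv_mul_cancel₀ h2.ne'] at this
    linarith
  have hβα : 8 * (β + 1) ≤ α := by
    nlinarith [mul_le_mul_of_nonneg_right hM (by linarith : (0:ℝ) ≤ 2*(β+1)),
      mul_le_mul_of_nonneg_left hδ'2 hα.le]
  -- equation ↔ root of robinG
  have hiff : ∀ k : ℝ,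
      (k * (k * Real.sinh (δ * k) - β * Real.cosh (δ * k)) =
        α * (k * Real.cosh (δ * k) - β * Real.sinh (δ * k))) ↔ robinG β α δ k = 0 := by
    intro k
    rw [robinG_eq, sub_eq_zero]
  constructor
  · -- existence and uniqueness
    have hcont : ContinuousOn (robinG β α δ) (Set.Icc α (2*α)) := by
      apply Continuous.continuousOn
      unfold robinG
      fun_prop
    have hGα : robinG β α δ α < 0 := robinG_neg hβ hα hδ hM hβα hδ'2 hα le_rfl
    have hG2α : 0 < robinG β α δ (2*α) := robinG_pos hβ hα hδ hM hβα hδ'2 le_rfl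
    have hsub := intermediate_value_Ioo (by linarith : α ≤ 2*α) hcont
    obtain ⟨k, hkmem, hk0⟩ := hsub ⟨hGα, hG2α⟩
    obtain ⟨hk1, hk2⟩ := hkmem
    refine ⟨k, ⟨by linarith, (hiff k).2 hk0⟩, ?_⟩
    rintro y ⟨hy0, hyeq⟩
    have hyroot := (hiff y).1 hyeq
    obtain ⟨hy1, hy2⟩ := robinG_root_loc hβ hα hδ hM hβα hδ'2 hy0 hyroot
    rcases lt_trichotomy y k with h | h | h
    · exfalso
      have := robinG_strictMono hβ hα hδ hM hβα hδ'2 (le_of_lt hy1) h (le_of_lt hk2)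
      rw [hyroot, hk0] at this; exact lt_irrefl 0 this
    · exact h
    · exfalso
      have := robinG_strictMono hβ hα hδ hM hβα hδ'2 (le_of_lt hk1) h (le_of_lt hy2)
      rw [hyroot, hk0] at this; exact lt_irrefl 0 this
  · -- bounds
    intro k hk heq
    have hroot := (hiff k).1 heq
    obtain ⟨h1, h2⟩ := robinG_root_loc hβ hα hδ hM hβα hδ'2 hk hroot
    have hb := robinG_root_bound hβ hα hδ hM hβα hδ'2 h1 h2 hroot
    have hepos := Real.exp_pos (-(δ*α))
    have habs : |k - α| = k - α := abs_of_pos (by linarith)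
    constructor
    · rw [habs]; nlinarith
    · have : |(-(k ^ 2)) - (-(α ^ 2))| = (k - α) * (k + α) := by
        rw [abs_of_nonpos (by nlinarith)]; ring
      rw [this]
      nlinarith [mul_nonneg (show (0:ℝ) ≤ k - α by linarith) hα.le]
end

section
/- For each fixed β ≥ 0 there exist constants C > 0, M > 0 and δ₀ > 0 such that for all α, δ > 0 with δ·α ≥ M and δ ≤ δ₀: if k > 0 satisfies k·(k·sinh(δk) − β·cosh(δk)) = α·(k·cosh(δk) − β·sinh(δk)) and ψ(t) = C₀·((1+β/k)e^{k(t−δ)} + (1−β/k)e^{−k(t−δ)}) with C₀ > 0 chosen so that ∫₀^δ ψ(t)² dt = 1, then |ψ(0)² − 2α| ≤ C·α·e^{−δα}. -/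
/-!
With `u = exp (δk)` the secular equation reads `(k - α)(k - β) u² = (k + α)(k + β)`. For small `δ`
it has no root below `min α β`, since `exp (2δk) - 1 ≤ 4δk` there; so `k > α`, and then
`k - α = O(k u⁻²)`. Independently of the secular equation, `∫₀^δ ψ²` is explicit and dominated by
`C₀² (1 - β/k)² u² / (2k)`, which pins down `C₀² = O(k u⁻²)`; comparing it with
`ψ(0)² = C₀² ((1 + β/k) u⁻¹ + (1 - β/k) u)²` leaves `ψ(0)² - 2k = C₀² · O(δk) = O(k / u)`.
-/

open Real

def RobinSecularEq (α β δ k : ℝ) : Prop :=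
  k * (k * sinh (δ * k) - β * cosh (δ * k)) = α * (k * cosh (δ * k) - β * sinh (δ * k))

theorem RobinSecularEq.sub_mul_sub_mul_exp_sq {α β δ k : ℝ} (h : RobinSecularEq α β δ k) :
    (k - α) * (k - β) * exp (δ * k) ^ 2 = (k + α) * (k + β) := by
  have hinv : exp (δ * k) * exp (-(δ * k)) = 1 := by rw [← exp_add, add_neg_cancel, exp_zero]
  rw [RobinSecularEq, sinh_eq, cosh_eq] at h
  linear_combination (2 * exp (δ * k)) * h + (k + α) * (k + β) * hinv

theorem lt_of_sub_mul_sub_mul_exp_sq_eq {α β δ k : ℝ} (hα : 0 < α) (hβ : 0 ≤ β) (hk : 0 < k)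
    (hδ : 0 ≤ δ) (hδβ : 2 * δ * β < 1)
    (h : (k - α) * (k - β) * exp (δ * k) ^ 2 = (k + α) * (k + β)) :
    α < k ∧ β < k := by
  have hprod : 0 < (k - α) * (k - β) :=
    pos_of_mul_pos_left (h ▸ by positivity : 0 < (k - α) * (k - β) * exp (δ * k) ^ 2)
      (by positivity)
  rcases mul_pos_iff.1 hprod with ⟨hαk, hβk⟩ | ⟨hkα, hkβ⟩
  · exact ⟨by linarith, by linarith⟩
  · -- here `β (exp (2δk) - 1) ≥ 2k`, while `exp (2δk) - 1 ≤ 4δk` and `2δβ < 1`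
    have hE : exp (δ * k) ^ 2 = exp (2 * (δ * k)) := by rw [← exp_nat_mul]; norm_num
    have hx : |2 * (δ * k)| ≤ 1 := by
      rw [abs_of_nonneg (by positivity)]; nlinarith
    have hbound := (abs_le.1 (abs_exp_sub_one_le hx)).2
    rw [abs_of_nonneg (by positivity), ← hE] at hbound
    have hE1 : 1 ≤ exp (δ * k) ^ 2 := one_le_pow₀ (one_le_exp (by positivity))
    have hβk : (β - k) * exp (δ * k) ^ 2 ≥ β + k := by nlinarith
    nlinarith [mul_le_mul_of_nonneg_left hbound hβ]

theorem sub_mul_exp_sq_le_of_sub_mul_sub_mul_exp_sq_eq {α β δ k : ℝ} (hβ : 0 ≤ β)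
    (hβα : 2 * β ≤ α) (hαk : α < k) (h : (k - α) * (k - β) * exp (δ * k) ^ 2 = (k + α) * (k + β)) :
    (k - α) * exp (δ * k) ^ 2 ≤ 6 * k := by
  have hkβ : k / 2 ≤ k - β := by linarith
  have hrhs : (k + α) * (k + β) ≤ 3 * k ^ 2 := by nlinarith
  nlinarith [mul_le_mul_of_nonneg_left hkβ (by positivity : 0 ≤ (k - α) * exp (δ * k) ^ 2)]

theorem RobinSecularEq.root_bounds {α β δ k : ℝ} (h : RobinSecularEq α β δ k) (hα : 0 < α)
    (hβ : 0 ≤ β) (hk : 0 < k) (hβα : 2 * β ≤ α) (hδβ : 2 * δ * β < 1) (hδα : 6 ≤ δ * α) :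
    α < k ∧ k ≤ 7 * α ∧ k - α ≤ 6 * k * exp (-(δ * α)) := by
  have hδ : 0 ≤ δ := (pos_of_mul_pos_left (by linarith) hα.le).le
  have hexp := h.sub_mul_sub_mul_exp_sq
  have hαk := (lt_of_sub_mul_sub_mul_exp_sq_eq hα hβ hk hδ hδβ hexp).1
  have hgap := sub_mul_exp_sq_le_of_sub_mul_sub_mul_exp_sq_eq hβ hβα hαk hexp
  have hw : exp (δ * α) ≤ exp (δ * k) ^ 2 := calc
    exp (δ * α) ≤ exp (δ * k) := exp_le_exp.2 (by nlinarith)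
    _ ≤ exp (δ * k) ^ 2 := le_self_pow₀ (one_le_exp (by positivity)) two_ne_zero
  have hgap' : (k - α) * exp (δ * α) ≤ 6 * k :=
    (mul_le_mul_of_nonneg_left hw (sub_nonneg.2 hαk.le)).trans hgap
  have h7 : 7 ≤ exp (δ * α) := by linarith [add_one_le_exp (δ * α)]
  refine ⟨hαk, by nlinarith, ?_⟩
  rwa [exp_neg, le_mul_inv_iff₀ (exp_pos _)]

theorem integral_sq_exp_add_exp {k : ℝ} (hk : k ≠ 0) (a b δ : ℝ) :
    ∫ t in (0:ℝ)..δ, (a * exp (k * (t - δ)) + b * exp (-(k * (t - δ)))) ^ 2 =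
      (a ^ 2 * (1 - exp (-(2 * k * δ))) + b ^ 2 * (exp (2 * k * δ) - 1)) / (2 * k)
        + 2 * a * b * δ := by
  have hderiv : ∀ t, HasDerivAt
      (fun t => (a ^ 2 * exp (2 * k * (t - δ)) - b ^ 2 * exp (-(2 * k * (t - δ)))) / (2 * k)
        + 2 * a * b * t)
      ((a * exp (k * (t - δ)) + b * exp (-(k * (t - δ)))) ^ 2) t := by
    intro t
    have hlin : HasDerivAt (fun t => 2 * k * (t - δ)) (2 * k) t := by
      simpa using ((hasDerivAt_id t).sub_const δ).const_mul (2 * k)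
    have hneg : HasDerivAt (fun t => -(2 * k * (t - δ))) (-(2 * k)) t := hlin.neg
    refine (((hlin.exp.const_mul (a ^ 2)).sub (hneg.exp.const_mul (b ^ 2))).div_const (2 * k)
      |>.add ((hasDerivAt_id t).const_mul (2 * a * b))).congr_deriv ?_
    have h2 : exp (2 * k * (t - δ)) = exp (k * (t - δ)) ^ 2 := by rw [← exp_nat_mul]; ring_nf
    have h2' : exp (-(2 * k * (t - δ))) = exp (-(k * (t - δ))) ^ 2 := by rw [← exp_nat_mul]; ring_nf
    have hinv : exp (k * (t - δ)) * exp (-(k * (t - δ))) = 1 := by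
      rw [← exp_add, add_neg_cancel, exp_zero]
    rw [h2, h2']
    field_simp
    linear_combination (-(2 * a * b)) * hinv
  rw [intervalIntegral.integral_eq_sub_of_hasDerivAt (fun t _ => hderiv t)
    (by apply Continuous.intervalIntegrable; fun_prop)]
  simp only [sub_self, mul_zero, neg_zero, exp_zero, zero_sub, mul_neg, neg_neg]
  ring

theorem abs_sq_sub_two_mul_le_of_integral_sq_eq_one {k δ r c : ℝ} (hk : 0 < k)
    (hδk : 2 ≤ δ * k) (hr0 : 0 ≤ r) (hr : r ≤ 1 / 2)
    (hnorm : ∫ t in (0:ℝ)..δ,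
      (c * ((1 + r) * exp (k * (t - δ)) + (1 - r) * exp (-(k * (t - δ))))) ^ 2 = 1) :
    |(c * ((1 + r) * exp (k * (0 - δ)) + (1 - r) * exp (-(k * (0 - δ))))) ^ 2 - 2 * k|
      ≤ 128 * k * exp (-(δ * k)) := by
  simp_rw [mul_pow c] at hnorm
  rw [intervalIntegral.integral_const_mul, integral_sq_exp_add_exp hk.ne'] at hnorm
  set u := exp (δ * k) with hu
  have hu2 : exp (2 * k * δ) = u ^ 2 := by rw [hu, ← exp_nat_mul]; ring_nf
  have hu0 : exp (k * (0 - δ)) = u⁻¹ := by rw [hu, ← exp_neg]; ring_nf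
  have hu1 : exp (-(k * (0 - δ))) = u := by rw [hu]; ring_nf
  rw [exp_neg (2 * k * δ), hu2] at hnorm
  rw [hu0, hu1, exp_neg, ← hu]
  have hx : δ * k ≤ u := by linarith [add_one_le_exp (δ * k)]
  have hsq : 2 ≤ u ^ 2 := by nlinarith
  have hu2inv : (u ^ 2)⁻¹ ≤ 1 := inv_le_one_of_one_le₀ (by linarith)
  have hu2inv0 : 0 ≤ (u ^ 2)⁻¹ := by positivity
  replace hnorm : c ^ 2 * ((1 + r) ^ 2 * (1 - (u ^ 2)⁻¹) + (1 - r) ^ 2 * (u ^ 2 - 1)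
      + 4 * (1 + r) * (1 - r) * (δ * k)) = 2 * k := by
    field_simp at hnorm ⊢
    linear_combination hnorm
  have hsub : (c * ((1 + r) * u⁻¹ + (1 - r) * u)) ^ 2 - 2 * k = c ^ 2 *
      (2 * (1 + r) ^ 2 * (u ^ 2)⁻¹ + 2 - 2 * r ^ 2 - 4 * r - 4 * (1 - r ^ 2) * (δ * k)) := by
    have hvu : u⁻¹ * u = 1 := inv_mul_cancel₀ (exp_pos _).ne'
    rw [← inv_pow] at hnorm ⊢
    linear_combination hnorm + c ^ 2 * 2 * (1 + r) * (1 - r) * hvu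
  have hbracket : |2 * (1 + r) ^ 2 * (u ^ 2)⁻¹ + 2 - 2 * r ^ 2 - 4 * r - 4 * (1 - r ^ 2) * (δ * k)|
      ≤ 8 * (δ * k) := by
    have ha : (1 + r) ^ 2 * (u ^ 2)⁻¹ ≤ 9 / 4 := by
      nlinarith [mul_le_mul_of_nonneg_left hu2inv (sq_nonneg (1 + r))]
    have hb : 3 / 4 * (δ * k) ≤ (1 - r ^ 2) * (δ * k) := by
      apply mul_le_mul_of_nonneg_right _ (by linarith); nlinarith
    rw [abs_le]; constructor <;> nlinarith [mul_nonneg (sq_nonneg (1 + r)) hu2inv0]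
  have hc : c ^ 2 * u ^ 2 ≤ 16 * k := by
    have h1 : 0 ≤ c ^ 2 * ((1 + r) ^ 2 * (1 - (u ^ 2)⁻¹)) :=
      mul_nonneg (sq_nonneg c) (mul_nonneg (sq_nonneg _) (by linarith))
    have h2 : 0 ≤ c ^ 2 * (4 * (1 + r) * (1 - r) * (δ * k)) :=
      mul_nonneg (sq_nonneg c) (mul_nonneg (mul_nonneg (mul_nonneg zero_le_four (by linarith))
        (by linarith)) (by linarith))
    have h3 : c ^ 2 * (u ^ 2 - 1) ≤ 4 * (c ^ 2 * ((1 - r) ^ 2 * (u ^ 2 - 1))) := by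
      have := mul_le_mul_of_nonneg_left (by nlinarith : 1 ≤ 4 * (1 - r) ^ 2)
        (mul_nonneg (sq_nonneg c) (by linarith : (0:ℝ) ≤ u ^ 2 - 1))
      linarith
    nlinarith [mul_nonneg (sq_nonneg c) (by linarith : (0:ℝ) ≤ u ^ 2 - 2)]
  rw [hsub, abs_mul, abs_of_nonneg (sq_nonneg c)]
  calc c ^ 2 * |2 * (1 + r) ^ 2 * (u ^ 2)⁻¹ + 2 - 2 * r ^ 2 - 4 * r - 4 * (1 - r ^ 2) * (δ * k)|
      ≤ c ^ 2 * (8 * u) := mul_le_mul_of_nonneg_left (hbracket.trans (by linarith)) (sq_nonneg c)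
    _ = 8 * (c ^ 2 * u ^ 2) * u⁻¹ := by field_simp
    _ ≤ 128 * k * u⁻¹ := by
      have := mul_le_mul_of_nonneg_right hc (inv_nonneg.2 (exp_pos (δ * k)).le)
      linarith

/-- For each fixed `β ≥ 0` there are `C > 0`, `M > 0`, `δ₀ > 0` such that for all
`α, δ > 0` with `δα ≥ M` and `δ ≤ δ₀`: if `k > 0` solves the secular equation of `T^β`
and `ψ(t) = C₀((1+β/k)e^{k(t−δ)} + (1−β/k)e^{−k(t−δ)})` with `C₀ > 0` normalizing `ψ`
in `L²(0,δ)`, then `|ψ(0)² − 2α| ≤ C·α·e^{−δα}`. -/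
theorem robin_robin_eigenfunction_boundary_value_zero (β : ℝ) (hβ : 0 ≤ β) :
    ∃ C > (0:ℝ), ∃ M > (0:ℝ), ∃ δ₀ > (0:ℝ), ∀ α δ : ℝ, 0 < α → 0 < δ →
      M ≤ δ * α → δ ≤ δ₀ →
      ∀ k C₀ : ℝ, 0 < k →
        k * (k * Real.sinh (δ * k) - β * Real.cosh (δ * k)) =
          α * (k * Real.cosh (δ * k) - β * Real.sinh (δ * k)) →
        0 < C₀ →
        ∀ ψ : ℝ → ℝ,
          ψ = (fun t => C₀ * ((1 + β / k) * Real.exp (k * (t - δ)) +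
            (1 - β / k) * Real.exp (-(k * (t - δ))))) →
          (∫ t in (0:ℝ)..δ, ψ t ^ 2) = 1 →
          |ψ 0 ^ 2 - 2 * α| ≤ C * α * Real.exp (-(δ * α)) := by
  refine ⟨980, by norm_num, 6, by norm_num, 1 / (1 + 2 * β), by positivity, ?_⟩
  intro α δ hα hδ hδα hδ₀ k C₀ hk hsec _ ψ hψ hnorm
  have hδβ : δ * (1 + 2 * β) ≤ 1 := (le_div_iff₀ (by positivity)).1 hδ₀
  obtain ⟨hαk, hk7, hgap⟩ :=
    RobinSecularEq.root_bounds hsec hα hβ hk (by nlinarith) (by nlinarith) hδα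
  subst hψ
  have hψ0 := abs_le.1 <| abs_sq_sub_two_mul_le_of_integral_sq_eq_one hk (by nlinarith)
    (div_nonneg hβ hk.le) (by rw [div_le_iff₀ hk]; nlinarith) hnorm
  have hdecay : exp (-(δ * k)) ≤ exp (-(δ * α)) := exp_le_exp.2 (by nlinarith)
  have hk_decay_k : k * exp (-(δ * k)) ≤ 7 * α * exp (-(δ * α)) :=
    mul_le_mul hk7 hdecay (exp_pos _).le (by linarith)
  have hk_decay_α : k * exp (-(δ * α)) ≤ 7 * α * exp (-(δ * α)) :=
    mul_le_mul_of_nonneg_right hk7 (exp_pos _).le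
  rw [abs_le]
  constructor <;> linarith
end

section
/- For each fixed β ≥ 0 there exist constants C > 0, M > 0 and δ₀ > 0 such that for all α, δ > 0 with δ·α ≥ M and δ ≤ δ₀: if k > 0 satisfies k·(k·sinh(δk) − β·cosh(δk)) = α·(k·cosh(δk) − β·sinh(δk)) and ψ(t) = C₀·((1+β/k)e^{k(t−δ)} + (1−β/k)e^{−k(t−δ)}) with C₀ > 0 chosen so that ∫₀^δ ψ(t)² dt = 1, then |∫₀^δ ψ'(t)² dt − α²| ≤ C·α²·e^{−δα}. -/
/-!
With `A = C₀ (1 + β/k)` and `B = C₀ (1 - β/k)` the eigenfunction is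
`ψ t = A e^{k(t-δ)} + B e^{-k(t-δ)}`, and `ψ'² = k² ψ² - 4k²AB` pointwise, so
`∫ ψ'² = k² - 4k²ABδ`. Since `cosh - sinh = e^{-x}`, the secular equation reads
`(k - α)(k sinh δk - β cosh δk) = α (k + β) e^{-δk}`. For `βδ < 1` (via `tanh x ≤ x`) the
second factor is positive, so `k > α`, and once `e^{δk} ≥ 3` it is of size `k e^{δk}`, so
`k - α = O(α e^{-δk})`. The normalization bounds `B²` by `O(k e^{-2δk})`, so the cross term
`4k²ABδ` is `O(k² · δk e^{-δk} · e^{-δk}) = O(α² e^{-δα})`.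
-/

open Real Set

theorem Real.sinh_le_mul_cosh {x : ℝ} (hx : 0 ≤ x) : sinh x ≤ x * cosh x := by
  have h := Convex.norm_image_sub_le_of_norm_deriv_le (f := sinh) (C := cosh x)
    (fun y _ => differentiableAt_sinh) (fun y hy => ?_) (convex_Icc 0 x)
    (left_mem_Icc.2 hx) (right_mem_Icc.2 hx)
  · simpa [abs_of_nonneg, hx, sinh_nonneg_iff.2 hx, mul_comm] using h
  · rw [deriv_sinh, norm_eq_abs, abs_of_pos (cosh_pos _), cosh_le_cosh,
      abs_of_nonneg hy.1, abs_of_nonneg hx]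
    exact hy.2

theorem integral_exp_mul {c : ℝ} (hc : c ≠ 0) (a b : ℝ) :
    ∫ t in a..b, exp (c * t) = (exp (c * b) - exp (c * a)) / c := by
  rw [intervalIntegral.integral_comp_mul_left (fun t => exp t) hc, integral_exp, smul_eq_mul,
    inv_mul_eq_div]

noncomputable def expProfile (A B k δ : ℝ) (t : ℝ) : ℝ :=
  A * exp (k * (t - δ)) + B * exp (-(k * (t - δ)))

section ExpProfile

variable (A B k δ : ℝ)

theorem continuous_expProfile : Continuous (expProfile A B k δ) := by
  unfold expProfile
  fun_prop

theorem hasDerivAt_expProfile (t : ℝ) :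
    HasDerivAt (expProfile A B k δ)
      (k * (A * exp (k * (t - δ)) - B * exp (-(k * (t - δ))))) t := by
  have h : HasDerivAt (fun t => k * (t - δ)) k t := by
    simpa using ((hasDerivAt_id t).sub_const δ).const_mul k
  refine ((h.exp.const_mul A).add (h.neg.exp.const_mul B)).congr_deriv ?_
  simp only [Pi.neg_apply]
  ring

theorem deriv_expProfile_sq (t : ℝ) :
    deriv (expProfile A B k δ) t ^ 2 = k ^ 2 * expProfile A B k δ t ^ 2 - 4 * k ^ 2 * A * B := by
  have hexp : exp (k * (t - δ)) * exp (-(k * (t - δ))) = 1 := by rw [← exp_add]; simp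
  rw [(hasDerivAt_expProfile A B k δ t).deriv, expProfile]
  linear_combination (-4 * k ^ 2 * A * B) * hexp

theorem integral_deriv_expProfile_sq (a b : ℝ) :
    ∫ t in a..b, deriv (expProfile A B k δ) t ^ 2 =
      k ^ 2 * (∫ t in a..b, expProfile A B k δ t ^ 2) - 4 * k ^ 2 * A * B * (b - a) := by
  simp_rw [deriv_expProfile_sq]
  rw [intervalIntegral.integral_sub, intervalIntegral.integral_const_mul]
  · simp only [intervalIntegral.integral_const, smul_eq_mul]
    ring
  · exact ((continuous_expProfile A B k δ).pow 2).intervalIntegrable _ _ |>.const_mul _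
  · exact intervalIntegrable_const

variable {A B k δ}

theorem sq_mul_le_integral_expProfile_sq (hA : 0 ≤ A) (hB : 0 ≤ B) (hk : 0 < k)
    (hδ : 0 ≤ δ) :
    B ^ 2 * (exp (2 * (δ * k)) - 1) / (2 * k) ≤ ∫ t in (0)..δ, expProfile A B k δ t ^ 2 := by
  have hpt (t : ℝ) :
      B ^ 2 * exp (2 * (k * δ)) * exp (-(2 * k) * t) ≤ expProfile A B k δ t ^ 2 := by
    have e : B ^ 2 * exp (2 * (k * δ)) * exp (-(2 * k) * t) = (B * exp (-(k * (t - δ)))) ^ 2 := by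
      rw [mul_assoc, ← exp_add, mul_pow, ← exp_nat_mul]
      ring_nf
    rw [e, expProfile]
    gcongr
    simp only [le_add_iff_nonneg_left]
    positivity
  calc B ^ 2 * (exp (2 * (δ * k)) - 1) / (2 * k)
      = ∫ t in (0)..δ, B ^ 2 * exp (2 * (k * δ)) * exp (-(2 * k) * t) := by
        rw [intervalIntegral.integral_const_mul, integral_exp_mul (neg_ne_zero.2 (by positivity))]
        have hexp : exp (2 * δ * k) * exp (-(2 * δ * k)) = 1 := by rw [← exp_add]; simp
        field_simp
        rw [mul_zero, neg_zero, exp_zero]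
        linear_combination B ^ 2 * hexp
    _ ≤ _ := intervalIntegral.integral_mono_on hδ
        (Continuous.intervalIntegrable (by fun_prop) _ _)
        (((continuous_expProfile A B k δ).pow 2).intervalIntegrable _ _) (fun t _ => hpt t)

theorem sq_le_of_integral_expProfile_sq_eq_one (hA : 0 ≤ A) (hB : 0 ≤ B) (hk : 0 < k)
    (hδ : 0 ≤ δ) (h3 : 3 ≤ exp (δ * k))
    (hnorm : ∫ t in (0)..δ, expProfile A B k δ t ^ 2 = 1) :
    B ^ 2 ≤ 9 / 4 * k * exp (-(δ * k)) ^ 2 := by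
  have hPR : exp (δ * k) * exp (-(δ * k)) = 1 := by rw [← exp_add]; simp
  have hP2 : exp (2 * (δ * k)) = exp (δ * k) ^ 2 := by rw [← exp_nat_mul]; norm_num
  have hint := sq_mul_le_integral_expProfile_sq hA hB hk hδ
  rw [hnorm, hP2, div_le_one (by positivity)] at hint
  have h9 : 8 / 9 * exp (δ * k) ^ 2 ≤ exp (δ * k) ^ 2 - 1 := by nlinarith
  have hB2 := (mul_le_mul_of_nonneg_left h9 (sq_nonneg B)).trans hint
  have := mul_le_mul_of_nonneg_right hB2 (sq_nonneg (exp (-(δ * k))))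
  linear_combination 9 / 8 * this - B ^ 2 * (exp (δ * k) * exp (-(δ * k)) + 1) * hPR

theorem mul_mul_le_of_integral_expProfile_sq_eq_one (hA : 0 ≤ A) (hB : 0 ≤ B)
    (hAB : A ≤ 3 * B) (hk : 0 < k) (hδ : 0 ≤ δ) (h3 : 3 ≤ exp (δ * k))
    (hnorm : ∫ t in (0)..δ, expProfile A B k δ t ^ 2 = 1) :
    4 * k ^ 2 * A * B * δ ≤ 27 * k ^ 2 * exp (-(δ * k)) := by
  have hB2 := sq_le_of_integral_expProfile_sq_eq_one hA hB hk hδ h3 hnorm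
  have hδkR : δ * k * exp (-(δ * k)) ≤ 1 := by
    have hPR : exp (δ * k) * exp (-(δ * k)) = 1 := by rw [← exp_add]; simp
    nlinarith [add_one_le_exp (δ * k), exp_pos (-(δ * k))]
  calc 4 * k ^ 2 * A * B * δ ≤ 4 * k ^ 2 * (3 * B) * B * δ := by gcongr
    _ = 12 * k ^ 2 * δ * B ^ 2 := by ring
    _ ≤ 12 * k ^ 2 * δ * (9 / 4 * k * exp (-(δ * k)) ^ 2) := by gcongr
    _ = 27 * k ^ 2 * (δ * k * exp (-(δ * k))) * exp (-(δ * k)) := by ring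
    _ ≤ 27 * k ^ 2 * 1 * exp (-(δ * k)) := by gcongr
    _ = 27 * k ^ 2 * exp (-(δ * k)) := by ring

end ExpProfile

def IsSecularRoot (α β δ k : ℝ) : Prop :=
  k * (k * sinh (δ * k) - β * cosh (δ * k)) = α * (k * cosh (δ * k) - β * sinh (δ * k))

theorem mul_sinh_lt_mul_cosh {β δ k : ℝ} (hβ : 0 ≤ β) (hk : 0 < k) (hδ : 0 ≤ δ)
    (hβδ : β * δ < 1) : β * sinh (δ * k) < k * cosh (δ * k) :=
  calc β * sinh (δ * k) ≤ β * (δ * k * cosh (δ * k)) :=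
        mul_le_mul_of_nonneg_left (sinh_le_mul_cosh (by positivity)) hβ
    _ = β * δ * (k * cosh (δ * k)) := by ring
    _ < k * cosh (δ * k) := mul_lt_of_lt_one_left (by positivity) hβδ

namespace IsSecularRoot

variable {α β δ k : ℝ}

theorem sub_mul_eq (h : IsSecularRoot α β δ k) :
    (k - α) * (k * sinh (δ * k) - β * cosh (δ * k)) = α * (k + β) * exp (-(δ * k)) := by
  unfold IsSecularRoot at h
  rw [← cosh_sub_sinh]
  linear_combination h

theorem lt (h : IsSecularRoot α β δ k) (hβ : 0 ≤ β) (hα : 0 < α) (hk : 0 < k)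
    (hδ : 0 ≤ δ) (hβδ : β * δ < 1) : α < k := by
  have hD := sub_pos.2 (mul_sinh_lt_mul_cosh hβ hk hδ hβδ)
  have hN : 0 < k * sinh (δ * k) - β * cosh (δ * k) :=
    pos_of_mul_pos_right (h ▸ mul_pos hα hD) hk.le
  have hkα := h.sub_mul_eq ▸ (by positivity : 0 < α * (k + β) * exp (-(δ * k)))
  exact sub_pos.1 (pos_of_mul_pos_left hkα hN.le)

theorem sub_le (h : IsSecularRoot α β δ k) (hα : 0 ≤ α) (hk : 0 < k)
    (hβk : 2 * β ≤ k) (h3 : 3 ≤ exp (δ * k)) : k - α ≤ 3 * α * exp (-(δ * k)) := by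
  rcases le_or_gt k α with hkα | hαk
  · have : 0 ≤ 3 * α * exp (-(δ * k)) := by positivity
    linarith
  have hPR : exp (δ * k) * exp (-(δ * k)) = 1 := by rw [← exp_add]; simp
  have hR : exp (-(δ * k)) ≤ 1 / 3 := by nlinarith [exp_pos (-(δ * k))]
  have hN : k * exp (δ * k) / 6 ≤ k * sinh (δ * k) - β * cosh (δ * k) := by
    rw [sinh_eq, cosh_eq]
    nlinarith [exp_pos (-(δ * k))]
  have h1 : (k - α) * (k * exp (δ * k) / 6) ≤ α * (3 / 2 * k) * exp (-(δ * k)) :=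
    calc (k - α) * (k * exp (δ * k) / 6)
        ≤ (k - α) * (k * sinh (δ * k) - β * cosh (δ * k)) :=
          mul_le_mul_of_nonneg_left hN (by linarith)
      _ = α * (k + β) * exp (-(δ * k)) := h.sub_mul_eq
      _ ≤ α * (3 / 2 * k) * exp (-(δ * k)) := by gcongr; linarith
  have h2 : (k - α) * exp (δ * k) ≤ 9 * α * exp (-(δ * k)) :=
    le_of_mul_le_mul_left (by linarith) hk
  nlinarith [exp_pos (-(δ * k))]

end IsSecularRoot

/-- For each fixed `β ≥ 0` there are `C > 0`, `M > 0`, `δ₀ > 0` such that for all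
`α, δ > 0` with `δα ≥ M` and `δ ≤ δ₀`: if `k > 0` solves the secular equation of `T^β`
and `ψ` is the normalized eigenfunction, then `|∫₀^δ ψ'(t)² dt − α²| ≤ C·α²·e^{−δα}`. -/
theorem robin_robin_eigenfunction_derivative_norm (β : ℝ) (hβ : 0 ≤ β) :
    ∃ C > (0:ℝ), ∃ M > (0:ℝ), ∃ δ₀ > (0:ℝ), ∀ α δ : ℝ, 0 < α → 0 < δ →
      M ≤ δ * α → δ ≤ δ₀ →
      ∀ k C₀ : ℝ, 0 < k →
        k * (k * Real.sinh (δ * k) - β * Real.cosh (δ * k)) =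
          α * (k * Real.cosh (δ * k) - β * Real.sinh (δ * k)) →
        0 < C₀ →
        ∀ ψ : ℝ → ℝ,
          ψ = (fun t => C₀ * ((1 + β / k) * Real.exp (k * (t - δ)) +
            (1 - β / k) * Real.exp (-(k * (t - δ))))) →
          (∫ t in (0:ℝ)..δ, ψ t ^ 2) = 1 →
          |(∫ t in (0:ℝ)..δ, deriv ψ t ^ 2) - α ^ 2| ≤
            C * α ^ 2 * Real.exp (-(δ * α)) := by
  refine ⟨450, by norm_num, 2 * β + 2, by positivity, 1 / (2 * β + 1), by positivity, ?_⟩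
  rintro α δ hα hδ hM hδ₀ k C₀ hk (hsec : IsSecularRoot α β δ k) hC₀ ψ rfl hnorm
  rw [le_div_iff₀ (by positivity)] at hδ₀
  have hβδ : β * δ < 1 := by nlinarith
  have hβα : 2 * β ≤ α := by nlinarith
  have hαk : α < k := hsec.lt hβ hα hk hδ.le hβδ
  have h3 : 3 ≤ exp (δ * k) := by nlinarith [add_one_le_exp (δ * k)]
  have hkα := hsec.sub_le hα.le hk (by linarith) h3
  have hRS : exp (-(δ * k)) ≤ exp (-(δ * α)) := exp_le_exp.2 (by nlinarith)
  have hR1 : exp (-(δ * k)) ≤ 1 := exp_le_one_iff.2 (by nlinarith)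
  have hβk : β / k ≤ 1 / 2 := by rw [div_le_iff₀ hk]; linarith
  have hB : 0 ≤ C₀ * (1 - β / k) := mul_nonneg hC₀.le (by linarith)
  have hψ : (fun t => C₀ * ((1 + β / k) * exp (k * (t - δ)) +
      (1 - β / k) * exp (-(k * (t - δ))))) =
      expProfile (C₀ * (1 + β / k)) (C₀ * (1 - β / k)) k δ := by
    funext t; rw [expProfile]; ring
  rw [hψ] at hnorm ⊢
  rw [integral_deriv_expProfile_sq, hnorm, sub_zero, mul_one]
  have hcross := mul_mul_le_of_integral_expProfile_sq_eq_one (by positivity) hB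
    (by nlinarith) hk hδ.le h3 hnorm
  have hcross₀ : 0 ≤ 4 * k ^ 2 * (C₀ * (1 + β / k)) * (C₀ * (1 - β / k)) * δ :=
    mul_nonneg (mul_nonneg (by positivity) hB) hδ.le
  have hk4 : k ≤ 4 * α := by nlinarith
  have hk2 : k ^ 2 * exp (-(δ * k)) ≤ 16 * α ^ 2 * exp (-(δ * k)) := by gcongr; nlinarith
  rw [abs_le]
  constructor <;> nlinarith [mul_le_mul_of_nonneg_left hRS (sq_nonneg α)]
end

section
/- For each fixed β ≥ 0 there exist constants M > 0 and δ₀ > 0 such that for all α, δ > 0 with δ·α ≥ M and δ ≤ δ₀ the following holds: let k > 0 satisfy k·(k·sinh(δk) − β·cosh(δk)) = α·(k·cosh(δk) − β·sinh(δk)) and let ψ(t) = C₀·((1+β/k)e^{k(t−δ)} + (1−β/k)e^{−k(t−δ)}) with C₀ > 0 chosen so that ∫₀^δ ψ(t)² dt = 1; then every continuously differentiable function f : [0,δ] → ℝ with ∫₀^δ f(t)ψ(t) dt = 0 satisfies ∫₀^δ f'(t)² dt − α·f(0)² − β·f(δ)² ≥ 0. -/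
/-!
If `F' = ψ` and `∫ f ψ = 0`, integrating `f' (F - c)` by parts gives
`f δ (F δ - c) - f 0 (F 0 - c)`. With `c = F δ` and `c = F 0`, Cauchy–Schwarz bounds
`f 0 ^ 2 D ^ 2` and `f δ ^ 2 D ^ 2`, where `D = F δ - F 0`, by `∫ f' ^ 2` times
`∫ (F - F δ) ^ 2` and `∫ (F - F 0) ^ 2` respectively. So the form is nonnegative on `ψ^⊥`
as soon as `α ∫ (F - F δ) ^ 2 + β ∫ (F - F 0) ^ 2 ≤ D ^ 2`.

For the explicit eigenfunction this is an estimate on exponentials. The secular equation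
forces `α < k`, so `δ k ≥ δ α` is large and `β / k` is small. Then the `α`-term is at most
`3/4 D ^ 2`, because `F δ - F` is dominated by the decaying exponential `e^{k(δ-t)}`, whose
square integrates to about `e^{2δk} / (2k)`. The `β`-term is at most `β δ D ^ 2 ≤ D ^ 2 / 4`.
-/

open Set MeasureTheory Real

theorem sq_integral_mul_le_integral_sq_mul_integral_sq {α : Type*} [MeasurableSpace α]
    {μ : Measure α} {u v : α → ℝ} (hu : Integrable (fun x ↦ u x ^ 2) μ)
    (hv : Integrable (fun x ↦ v x ^ 2) μ) (huv : Integrable (fun x ↦ u x * v x) μ) :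
    (∫ x, u x * v x ∂μ) ^ 2 ≤ (∫ x, u x ^ 2 ∂μ) * ∫ x, v x ^ 2 ∂μ := by
  have hquad : ∀ s : ℝ,
      0 ≤ (∫ x, v x ^ 2 ∂μ) * (s * s) + (-2 * ∫ x, u x * v x ∂μ) * s + ∫ x, u x ^ 2 ∂μ := by
    intro s
    have hexpand : ∫ x, (u x - s * v x) ^ 2 ∂μ = (∫ x, v x ^ 2 ∂μ) * (s * s)
        + (-2 * ∫ x, u x * v x ∂μ) * s + ∫ x, u x ^ 2 ∂μ := by
      have hpt : (fun x ↦ (u x - s * v x) ^ 2)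
          = fun x ↦ u x ^ 2 - (2 * s) * (u x * v x) + s ^ 2 * v x ^ 2 := by
        ext x; ring
      have huv' : Integrable (fun x ↦ u x ^ 2 - 2 * s * (u x * v x)) μ :=
        hu.sub (huv.const_mul _)
      rw [hpt, integral_add huv' (hv.const_mul _), integral_sub hu (huv.const_mul _),
        integral_const_mul, integral_const_mul]
      ring
    exact hexpand ▸ integral_nonneg fun x ↦ sq_nonneg _
  have := discrim_le_zero hquad
  rw [discrim] at this
  linarith

theorem sq_intervalIntegral_mul_le {a b : ℝ} (hab : a ≤ b) {u v : ℝ → ℝ}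
    (hu : ContinuousOn u (Icc a b)) (hv : ContinuousOn v (Icc a b)) :
    (∫ t in a..b, u t * v t) ^ 2 ≤ (∫ t in a..b, u t ^ 2) * ∫ t in a..b, v t ^ 2 := by
  have hint : ∀ {w : ℝ → ℝ}, ContinuousOn w (Icc a b) → IntegrableOn w (Ioc a b) :=
    fun hw ↦ (hw.integrableOn_Icc).mono_set Ioc_subset_Icc_self
  simp only [intervalIntegral.integral_of_le hab]
  exact sq_integral_mul_le_integral_sq_mul_integral_sq (hint (hu.pow 2)) (hint (hv.pow 2))
    (hint (hu.mul hv))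

theorem integral_sub_left_sq_le_of_monotoneOn {a b : ℝ} (hab : a ≤ b) {F : ℝ → ℝ}
    (hmono : MonotoneOn F (Icc a b)) (hF : ContinuousOn F (Icc a b)) :
    ∫ t in a..b, (F t - F a) ^ 2 ≤ (b - a) * (F b - F a) ^ 2 := by
  have hbound : ∀ t ∈ Icc a b, (F t - F a) ^ 2 ≤ (F b - F a) ^ 2 := fun t ht ↦
    pow_le_pow_left₀ (sub_nonneg.mpr (hmono ⟨le_rfl, hab⟩ ht ht.1))
      (sub_le_sub_right (hmono ht ⟨hab, le_rfl⟩ ht.2) _) 2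
  have hint : IntervalIntegrable (fun t ↦ (F t - F a) ^ 2) volume a b :=
    ((hF.sub continuousOn_const).pow 2).intervalIntegrable_of_Icc hab
  have := intervalIntegral.integral_mono_on hab hint intervalIntegrable_const hbound
  simpa only [intervalIntegral.integral_const, smul_eq_mul] using this

theorem sinh_lt_mul_cosh {x : ℝ} (hx : 0 < x) : sinh x < x * cosh x := by
  have hmono : StrictMonoOn (fun y ↦ y * cosh y - sinh y) (Ici 0) := by
    refine strictMonoOn_of_deriv_pos (convex_Ici 0) (by fun_prop) fun y hy ↦ ?_
    rw [interior_Ici] at hy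
    have hderiv : HasDerivAt (fun y ↦ y * cosh y - sinh y) (y * sinh y) y := by
      refine (((hasDerivAt_id y).mul (hasDerivAt_cosh y)).sub (hasDerivAt_sinh y)).congr_deriv ?_
      simp
    rw [hderiv.deriv]
    exact mul_pos hy (sinh_pos_iff.mpr hy)
  simpa using hmono self_mem_Ici hx.le hx

section Trace

variable {a b : ℝ} {f F ψ : ℝ → ℝ}

theorem sq_boundary_term_le_of_integral_mul_eq_zero (hab : a < b)
    (hf : ContDiffOn ℝ 1 f (Icc a b)) (hF : ∀ t ∈ Icc a b, HasDerivWithinAt F (ψ t) (Icc a b) t)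
    (hψ : ContinuousOn ψ (Icc a b)) (horth : ∫ t in a..b, f t * ψ t = 0) (c : ℝ) :
    (f b * (F b - c) - f a * (F a - c)) ^ 2
      ≤ (∫ t in a..b, derivWithin f (Icc a b) t ^ 2) * ∫ t in a..b, (F t - c) ^ 2 := by
  have hIcc : uIcc a b = Icc a b := uIcc_of_le hab.le
  have hf' : ContinuousOn (derivWithin f (Icc a b)) (Icc a b) :=
    hf.continuousOn_derivWithin (uniqueDiffOn_Icc hab) le_rfl
  have hFc : ContinuousOn (fun t ↦ F t - c) (Icc a b) :=
    (HasDerivWithinAt.continuousOn hF).sub continuousOn_const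
  have hparts : ∫ t in a..b, derivWithin f (Icc a b) t * (F t - c)
      = f b * (F b - c) - f a * (F a - c) := by
    have := intervalIntegral.integral_mul_deriv_eq_deriv_mul_of_hasDerivWithinAt
      (u := fun t ↦ F t - c) (v := f) (u' := ψ) (v' := derivWithin f (Icc a b))
      (by rw [hIcc]; exact fun t ht ↦ (hF t ht).sub_const c)
      (by rw [hIcc]; exact fun t ht ↦ ((hf.differentiableOn one_ne_zero) t ht).hasDerivWithinAt)
      (hψ.intervalIntegrable_of_Icc hab.le) (hf'.intervalIntegrable_of_Icc hab.le)
    simp only [mul_comm (ψ _), horth, sub_zero] at this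
    simp only [mul_comm (derivWithin f _ _)]
    rw [this]; ring
  rw [← hparts]
  exact sq_intervalIntegral_mul_le hab.le hf' hFc

theorem add_mul_sq_le_integral_derivWithin_sq (hab : a < b) (hf : ContDiffOn ℝ 1 f (Icc a b))
    (hF : ∀ t ∈ Icc a b, HasDerivWithinAt F (ψ t) (Icc a b) t) (hψ : ContinuousOn ψ (Icc a b))
    (horth : ∫ t in a..b, f t * ψ t = 0) {α β : ℝ} (hα : 0 ≤ α) (hβ : 0 ≤ β)
    (hFab : F a ≠ F b)
    (hweight : α * (∫ t in a..b, (F t - F b) ^ 2) + β * ∫ t in a..b, (F t - F a) ^ 2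
      ≤ (F b - F a) ^ 2) :
    α * f a ^ 2 + β * f b ^ 2 ≤ ∫ t in a..b, derivWithin f (Icc a b) t ^ 2 := by
  set J := ∫ t in a..b, derivWithin f (Icc a b) t ^ 2
  have hJ : 0 ≤ J := intervalIntegral.integral_nonneg hab.le fun t _ ↦ sq_nonneg _
  have hleft := sq_boundary_term_le_of_integral_mul_eq_zero hab hf hF hψ horth (F b)
  have hright := sq_boundary_term_le_of_integral_mul_eq_zero hab hf hF hψ horth (F a)
  have hD : 0 < (F b - F a) ^ 2 := by
    have := sub_ne_zero.mpr hFab.symm; positivity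
  refine le_of_mul_le_mul_right ?_ hD
  calc (α * f a ^ 2 + β * f b ^ 2) * (F b - F a) ^ 2
      = α * (f b * (F b - F b) - f a * (F a - F b)) ^ 2
        + β * (f b * (F b - F a) - f a * (F a - F a)) ^ 2 := by ring
    _ ≤ α * (J * ∫ t in a..b, (F t - F b) ^ 2)
        + β * (J * ∫ t in a..b, (F t - F a) ^ 2) := by gcongr
    _ = J * (α * (∫ t in a..b, (F t - F b) ^ 2) + β * ∫ t in a..b, (F t - F a) ^ 2) := by ring
    _ ≤ J * (F b - F a) ^ 2 := by gcongr
end Trace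

theorem lt_of_robin_secular {α β k δ : ℝ} (hα : 0 < α) (hβ : 0 ≤ β) (hk : 0 < k)
    (hδ : 0 < δ) (hβδ : β * δ ≤ 1)
    (hsec : k * (k * sinh (δ * k) - β * cosh (δ * k))
      = α * (k * cosh (δ * k) - β * sinh (δ * k))) :
    α < k := by
  have hx : 0 < δ * k := mul_pos hδ hk
  have hsec' : k * (α + β) * cosh (δ * k) = (k ^ 2 + α * β) * sinh (δ * k) := by
    linear_combination -hsec
  have hpos : 0 < k ^ 2 + α * β := by positivity
  have h1 : k * (α + β) < k ^ 2 + α * β := by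
    refine lt_of_mul_lt_mul_right ?_ (cosh_pos (δ * k)).le
    rw [hsec']
    exact mul_lt_mul_of_pos_left (sinh_lt_cosh _) hpos
  -- `h1` says `(k - α) (k - β) > 0`, so `α < k` follows from `β < k`.
  have h2 : α + β < δ * (k ^ 2 + α * β) := by
    refine lt_of_mul_lt_mul_right (a := k * cosh (δ * k)) ?_ (by positivity)
    calc (α + β) * (k * cosh (δ * k)) = (k ^ 2 + α * β) * sinh (δ * k) := by
          linear_combination hsec'
      _ < (k ^ 2 + α * β) * (δ * k * cosh (δ * k)) :=
        mul_lt_mul_of_pos_left (sinh_lt_mul_cosh hx) hpos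
      _ = δ * (k ^ 2 + α * β) * (k * cosh (δ * k)) := by ring
  have hβk : β < k := by
    by_contra! h
    nlinarith [mul_le_mul_of_nonneg_left h hδ.le]
  nlinarith

noncomputable def robinPrimitive (C₀ A B k δ t : ℝ) : ℝ :=
  C₀ / k * (A * exp (k * (t - δ)) - B * exp (-(k * (t - δ))))

section Eigenfunction

variable {C₀ A B k δ : ℝ}

theorem hasDerivAt_robinPrimitive (hk : k ≠ 0) (t : ℝ) :
    HasDerivAt (robinPrimitive C₀ A B k δ)
      (C₀ * (A * exp (k * (t - δ)) + B * exp (-(k * (t - δ))))) t := by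
  have harg : HasDerivAt (fun t ↦ k * (t - δ)) k t := by
    simpa using ((hasDerivAt_id t).sub_const δ).const_mul k
  refine (((harg.exp.const_mul A).sub (harg.fun_neg.exp.const_mul B)).const_mul
    (C₀ / k)).congr_deriv ?_
  field_simp
  ring

theorem continuous_robinPrimitive : Continuous (robinPrimitive C₀ A B k δ) := by
  unfold robinPrimitive
  fun_prop

theorem strictMono_robinPrimitive (hC₀ : 0 < C₀) (hA : 0 < A) (hB : 0 < B) (hk : 0 < k) :
    StrictMono (robinPrimitive C₀ A B k δ) :=
  strictMono_of_hasDerivAt_pos (hasDerivAt_robinPrimitive hk.ne') fun _ ↦ by positivity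

theorem robinPrimitive_self : robinPrimitive C₀ A B k δ δ = C₀ / k * (A - B) := by
  simp [robinPrimitive]

theorem robinPrimitive_zero :
    robinPrimitive C₀ A B k δ 0 = C₀ / k * (A * exp (-(δ * k)) - B * exp (δ * k)) := by
  simp only [robinPrimitive]
  ring_nf

theorem integral_add_mul_exp_sq (hk : k ≠ 0) (q : ℝ) :
    ∫ t in (0 : ℝ)..δ, (q + B * exp (-(k * (t - δ)))) ^ 2
      = q ^ 2 * δ + 2 * q * B * (exp (δ * k) - 1) / k
        + B ^ 2 * (exp (δ * k) ^ 2 - 1) / (2 * k) := by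
  have hV : ∀ t, HasDerivAt
      (fun t ↦ q ^ 2 * t - 2 * q * B / k * exp (-(k * (t - δ)))
        - B ^ 2 / (2 * k) * exp (-(k * (t - δ))) ^ 2)
      ((q + B * exp (-(k * (t - δ)))) ^ 2) t := by
    intro t
    have harg : HasDerivAt (fun t ↦ -(k * (t - δ))) (-k) t := by
      simpa using (((hasDerivAt_id t).sub_const δ).const_mul k).fun_neg
    refine ((((hasDerivAt_id t).const_mul (q ^ 2)).sub
      (harg.exp.const_mul (2 * q * B / k))).sub
      ((harg.exp.pow 2).const_mul (B ^ 2 / (2 * k)))).congr_deriv ?_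
    field_simp
    ring
  rw [intervalIntegral.integral_eq_sub_of_hasDerivAt (fun t _ ↦ hV t)
    (by apply Continuous.intervalIntegrable; fun_prop)]
  simp only [sub_self, mul_zero, neg_zero, exp_zero, zero_sub, mul_neg, neg_neg]
  ring_nf

theorem integral_robinPrimitive_sub_self_sq_le (hC₀ : 0 < C₀) (hA : 0 < A) (hB : 0 < B)
    (hk : 0 < k) (hδ : 0 ≤ δ) :
    ∫ t in (0 : ℝ)..δ, (robinPrimitive C₀ A B k δ t - robinPrimitive C₀ A B k δ δ) ^ 2
      ≤ (C₀ / k) ^ 2 * ∫ t in (0 : ℝ)..δ, (A - B + B * exp (-(k * (t - δ)))) ^ 2 := by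
  set P := robinPrimitive C₀ A B k δ
  have hmono := (strictMono_robinPrimitive (δ := δ) hC₀ hA hB hk).monotone
  have hbound : ∀ t ∈ Icc 0 δ,
      (P t - P δ) ^ 2 ≤ (C₀ / k * (A - B + B * exp (-(k * (t - δ))))) ^ 2 := by
    intro t ht
    have hle : P δ - P t ≤ C₀ / k * (A - B + B * exp (-(k * (t - δ)))) := by
      have : 0 ≤ C₀ / k * (A * exp (k * (t - δ))) := by positivity
      simp only [P, robinPrimitive_self, robinPrimitive]
      linarith
    have hnonneg : 0 ≤ P δ - P t := sub_nonneg.mpr (hmono ht.2)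
    nlinarith
  rw [← intervalIntegral.integral_const_mul]
  refine intervalIntegral.integral_mono_on hδ ?_ ?_ fun t ht ↦ (hbound t ht).trans_eq (by ring)
  all_goals apply Continuous.intervalIntegrable
  · exact (continuous_robinPrimitive.sub continuous_const).pow 2
  · fun_prop
end Eigenfunction

theorem robin_weight_polynomial_le {p X y z : ℝ} (hp : 0 ≤ p) (hp' : p ≤ 1 / 400)
    (hpX : 4 * p ^ 2 * X ≤ 1 / 400) (hy : 101 ≤ y) (hz : z ≤ 1) :
    (2 * p) ^ 2 * X + 2 * (2 * p) * (1 - p) * (y - 1) + (1 - p) ^ 2 * (y ^ 2 - 1) / 2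
      ≤ 3 / 4 * (2 * p - (1 + p) * z + (1 - p) * y) ^ 2 := by
  have hD : 399 / 400 * y - 2 ≤ 2 * p - (1 + p) * z + (1 - p) * y := by nlinarith
  have hD2 : (399 / 400 * y - 2) ^ 2 ≤ (2 * p - (1 + p) * z + (1 - p) * y) ^ 2 :=
    pow_le_pow_left₀ (by linarith) hD 2
  have hlhs : (2 * p) ^ 2 * X + 2 * (2 * p) * (1 - p) * (y - 1) + (1 - p) ^ 2 * (y ^ 2 - 1) / 2
      ≤ 1 / 400 + y / 100 + y ^ 2 / 2 := by
    nlinarith [mul_nonneg (mul_nonneg hp hp) (by linarith : (0:ℝ) ≤ y - 1),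
      mul_le_mul_of_nonneg_left hp' (by linarith : (0:ℝ) ≤ y)]
  nlinarith

theorem robin_weight_estimate {α β k δ C₀ : ℝ} (hC₀ : 0 < C₀) (hk : 0 < k) (hδ : 0 < δ)
    (hβ : 0 ≤ β) (hβδ : β * δ ≤ 1 / 4) (hβk : β / k ≤ 1 / 400) (hαk : α ≤ k)
    (hδk : 100 ≤ δ * k) :
    α * (∫ t in (0 : ℝ)..δ, (robinPrimitive C₀ (1 + β / k) (1 - β / k) k δ t
        - robinPrimitive C₀ (1 + β / k) (1 - β / k) k δ δ) ^ 2)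
      + β * ∫ t in (0 : ℝ)..δ, (robinPrimitive C₀ (1 + β / k) (1 - β / k) k δ t
        - robinPrimitive C₀ (1 + β / k) (1 - β / k) k δ 0) ^ 2
      ≤ (robinPrimitive C₀ (1 + β / k) (1 - β / k) k δ δ
        - robinPrimitive C₀ (1 + β / k) (1 - β / k) k δ 0) ^ 2 := by
  set p := β / k with hp_def
  have hp : 0 ≤ p := by positivity
  set P := robinPrimitive C₀ (1 + p) (1 - p) k δ
  have hmono := strictMono_robinPrimitive (δ := δ) hC₀ (by linarith : 0 < 1 + p)
    (by linarith : 0 < 1 - p) hk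
  have hD : P δ - P 0
      = C₀ / k * (2 * p - (1 + p) * exp (-(δ * k)) + (1 - p) * exp (δ * k)) := by
    simp only [P, robinPrimitive_self, robinPrimitive_zero]
    ring
  have hpX : 4 * p ^ 2 * (δ * k) ≤ 1 / 400 := by
    have : 4 * p ^ 2 * (δ * k) = 4 * (β * δ) * p := by
      simp only [hp_def]; field_simp
    rw [this]
    nlinarith
  have hy : 101 ≤ exp (δ * k) := by linarith [add_one_le_exp (δ * k)]
  have hz : exp (-(δ * k)) ≤ 1 := exp_le_one_iff.mpr (by linarith)
  have hleft : α * (∫ t in (0 : ℝ)..δ, (P t - P δ) ^ 2) ≤ 3 / 4 * (P δ - P 0) ^ 2 :=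
    calc α * (∫ t in (0 : ℝ)..δ, (P t - P δ) ^ 2)
        ≤ k * ∫ t in (0 : ℝ)..δ, (P t - P δ) ^ 2 :=
          mul_le_mul_of_nonneg_right hαk
            (intervalIntegral.integral_nonneg hδ.le fun t _ ↦ sq_nonneg _)
      _ ≤ k * ((C₀ / k) ^ 2 * ∫ t in (0 : ℝ)..δ,
            (1 + p - (1 - p) + (1 - p) * exp (-(k * (t - δ)))) ^ 2) := by
          gcongr
          exact integral_robinPrimitive_sub_self_sq_le hC₀ (by linarith) (by linarith) hk hδ.le
      _ = (C₀ / k) ^ 2 * ((2 * p) ^ 2 * (δ * k) + 2 * (2 * p) * (1 - p) * (exp (δ * k) - 1)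
            + (1 - p) ^ 2 * (exp (δ * k) ^ 2 - 1) / 2) := by
          rw [integral_add_mul_exp_sq hk.ne']
          field_simp
          ring
      _ ≤ (C₀ / k) ^ 2 * (3 / 4 *
            (2 * p - (1 + p) * exp (-(δ * k)) + (1 - p) * exp (δ * k)) ^ 2) := by
          gcongr
          exact robin_weight_polynomial_le hp hβk hpX hy hz
      _ = 3 / 4 * (P δ - P 0) ^ 2 := by rw [hD]; ring
  have hright : β * ∫ t in (0 : ℝ)..δ, (P t - P 0) ^ 2 ≤ 1 / 4 * (P δ - P 0) ^ 2 :=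
    calc β * ∫ t in (0 : ℝ)..δ, (P t - P 0) ^ 2 ≤ β * ((δ - 0) * (P δ - P 0) ^ 2) := by
          gcongr
          exact integral_sub_left_sq_le_of_monotoneOn hδ.le (hmono.monotone.monotoneOn _)
            continuous_robinPrimitive.continuousOn
      _ = β * δ * (P δ - P 0) ^ 2 := by ring
      _ ≤ 1 / 4 * (P δ - P 0) ^ 2 := by gcongr
  linarith

/-- For each fixed `β ≥ 0` there are `M > 0` and `δ₀ > 0` such that for all `α, δ > 0`
with `δα ≥ M`, `δ ≤ δ₀`: if `k > 0` solves the secular equation of `T^β` and `ψ` is the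
normalized eigenfunction, then every `C¹` function `f` on `[0,δ]` orthogonal to `ψ` in
`L²(0,δ)` satisfies `∫₀^δ f'² − α f(0)² − β f(δ)² ≥ 0`. -/
theorem robin_robin_form_nonneg_on_orthogonal_complement (β : ℝ) (hβ : 0 ≤ β) :
    ∃ M > (0:ℝ), ∃ δ₀ > (0:ℝ), ∀ α δ : ℝ, 0 < α → 0 < δ →
      M ≤ δ * α → δ ≤ δ₀ →
      ∀ k C₀ : ℝ, 0 < k →
        k * (k * Real.sinh (δ * k) - β * Real.cosh (δ * k)) =
          α * (k * Real.cosh (δ * k) - β * Real.sinh (δ * k)) →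
        0 < C₀ →
        ∀ ψ : ℝ → ℝ,
          ψ = (fun t => C₀ * ((1 + β / k) * Real.exp (k * (t - δ)) +
            (1 - β / k) * Real.exp (-(k * (t - δ))))) →
          (∫ t in (0:ℝ)..δ, ψ t ^ 2) = 1 →
          ∀ f : ℝ → ℝ, ContDiffOn ℝ 1 f (Set.Icc 0 δ) →
            (∫ t in (0:ℝ)..δ, f t * ψ t) = 0 →
            0 ≤ (∫ t in (0:ℝ)..δ, (derivWithin f (Set.Icc 0 δ) t) ^ 2)
              - α * f 0 ^ 2 - β * f δ ^ 2 := by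
  refine ⟨100, by norm_num, 1 / (4 * (β + 1)), by positivity, ?_⟩
  intro α δ hα hδ hM hδ₀ k C₀ hk hsec hC₀ ψ rfl _ f hf horth
  have hδβ : δ * (4 * (β + 1)) ≤ 1 := (le_div_iff₀ (by positivity)).mp hδ₀
  have hβδ : β * δ ≤ 1 / 4 := by nlinarith
  have hα400 : 400 * (β + 1) ≤ α := by nlinarith
  have hαk := lt_of_robin_secular hα hβ hk hδ (by linarith) hsec
  have hβk : β / k ≤ 1 / 400 := by rw [div_le_iff₀ hk]; linarith
  have hp : 0 ≤ β / k := div_nonneg hβ hk.le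
  have hFne := (strictMono_robinPrimitive (δ := δ) hC₀ (by linarith : 0 < 1 + β / k)
    (by linarith : 0 < 1 - β / k) hk hδ).ne
  have := add_mul_sq_le_integral_derivWithin_sq hδ hf
    (fun t _ ↦ (hasDerivAt_robinPrimitive hk.ne' t).hasDerivWithinAt) (by fun_prop) horth
    hα.le hβ hFne (robin_weight_estimate hC₀ hk hδ hβ hβδ hβk hαk.le (by nlinarith))
  linarith
end
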